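/- For the Landau-Zener Lindbladian L_s ρ = -i[H_s,ρ] - (γ_s/2)[√H_s,[√H_s,ρ]], the inverse of L_s on the range of L_s satisfies L_s⁻¹ E_s = E_s / (2(-i - γ_s) e_s) and L_s⁻¹ E_s* = (L_s⁻¹ E_s)*. -/
import Mathlib


open Matrix

/-- The half-gap `e_s = (1/2)√(s² + g²)`. -/
noncomputable def eLZ (g s : ℝ) : ℝ := (1/2) * Real.sqrt (s^2 + g^2)

/-- The Landau-Zener Hamiltonian `H_s = (1/2)[[s, g],[g, -s]]`. -/
noncomputable def HLZ (g s : ℝ) : Matrix (Fin 2) (Fin 2) ℂ :=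
  (1/2 : ℂ) • !![(s : ℂ), (g : ℂ); (g : ℂ), -(s : ℂ)]

/-- The eigenprojection `P_s⁺` of `H_s` for the eigenvalue `+e_s`. -/
noncomputable def PpLZ (g s : ℝ) : Matrix (Fin 2) (Fin 2) ℂ :=
  (1/2 : ℂ) • (1 + ((eLZ g s : ℝ) : ℂ)⁻¹ • HLZ g s)

/-- The eigenprojection `P_s⁻` of `H_s` for the eigenvalue `-e_s`. -/
noncomputable def PmLZ (g s : ℝ) : Matrix (Fin 2) (Fin 2) ℂ :=
  (1/2 : ℂ) • (1 - ((eLZ g s : ℝ) : ℂ)⁻¹ • HLZ g s)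

/-- The (real) coherence `E_s = (1/(4e_s))[[g, -s-2e_s],[-s+2e_s, -g]]`. -/
noncomputable def ELZ (g s : ℝ) : Matrix (Fin 2) (Fin 2) ℂ :=
  ((4 * eLZ g s : ℝ) : ℂ)⁻¹ •
    !![(g : ℂ), ((-s - 2 * eLZ g s : ℝ) : ℂ); ((-s + 2 * eLZ g s : ℝ) : ℂ), -(g : ℂ)]

/-- `√H_s = sgn(H_s)√|H_s| = √(e_s) (P_s⁺ - P_s⁻)`. -/
noncomputable def sqrtHLZ (g s : ℝ) : Matrix (Fin 2) (Fin 2) ℂ :=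
  ((Real.sqrt (eLZ g s) : ℝ) : ℂ) • (PpLZ g s - PmLZ g s)

/-- The dephasing superoperator `D ρ = -[√H_s, [√H_s, ρ]]`. -/
noncomputable def DLZ (g s : ℝ) (ρ : Matrix (Fin 2) (Fin 2) ℂ) : Matrix (Fin 2) (Fin 2) ℂ :=
  -(sqrtHLZ g s * (sqrtHLZ g s * ρ - ρ * sqrtHLZ g s)
      - (sqrtHLZ g s * ρ - ρ * sqrtHLZ g s) * sqrtHLZ g s)

/-- The Landau–Zener Lindbladian `L_s ρ = -i[H_s,ρ] - (γ/2)[√H_s,[√H_s,ρ]]`. -/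
noncomputable def LLZ (g s γ : ℝ) (ρ : Matrix (Fin 2) (Fin 2) ℂ) :
    Matrix (Fin 2) (Fin 2) ℂ :=
  -(Complex.I) • (HLZ g s * ρ - ρ * HLZ g s) + ((γ : ℂ)/2) • DLZ g s ρ

/- ----------------- auxiliary lemmas ----------------- -/

lemma eLZ_pos (g s : ℝ) (hg : 0 < g) : 0 < eLZ g s := by
  have : 0 < s^2 + g^2 := by positivity
  simp only [eLZ]
  positivity

lemma eLZ_sq (g s : ℝ) : (eLZ g s)^2 = (s^2 + g^2)/4 := by
  have h : 0 ≤ s^2 + g^2 := by positivity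
  simp only [eLZ, mul_pow, Real.sq_sqrt h]
  ring

lemma gHE (s g e : ℂ) (hne : e ≠ 0) (he2 : e^2 = (s^2+g^2)/4) :
    ((1/2 : ℂ) • !![s, g; g, -s]) * !![g, -s - 2*e; -s + 2*e, -g]
      = e • !![g, -s - 2*e; -s + 2*e, -g] := by
  ext i j
  fin_cases i <;> fin_cases j <;>
    simp [Matrix.mul_apply, Fin.sum_univ_succ] <;>
    field_simp <;>
    (first
      | ring1
      | linear_combination (4:ℂ) * he2
      | linear_combination (-4:ℂ) * he2)

lemma gEH (s g e : ℂ) (hne : e ≠ 0) (he2 : e^2 = (s^2+g^2)/4) :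
    !![g, -s - 2*e; -s + 2*e, -g] * ((1/2 : ℂ) • !![s, g; g, -s])
      = (-e) • !![g, -s - 2*e; -s + 2*e, -g] := by
  ext i j
  fin_cases i <;> fin_cases j <;>
    simp [Matrix.mul_apply, Fin.sum_univ_succ] <;>
    field_simp <;>
    (first
      | ring1
      | linear_combination (4:ℂ) * he2
      | linear_combination (-4:ℂ) * he2)

lemma ELZ_cast (g s : ℝ) :
    ELZ g s = ((4 * eLZ g s : ℝ) : ℂ)⁻¹ •
      !![(g : ℂ), -(s : ℂ) - 2*((eLZ g s : ℝ) : ℂ);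
         -(s : ℂ) + 2*((eLZ g s : ℝ) : ℂ), -(g : ℂ)] := by
  simp only [ELZ]
  norm_cast

lemma HLZ_mul_ELZ (g s : ℝ) (hg : 0 < g) :
    HLZ g s * ELZ g s = ((eLZ g s : ℝ) : ℂ) • ELZ g s := by
  have he := eLZ_pos g s hg
  have hne : ((eLZ g s : ℝ) : ℂ) ≠ 0 := by exact_mod_cast he.ne'
  have he2 : ((eLZ g s : ℝ) : ℂ)^2 = ((s:ℂ)^2 + (g:ℂ)^2)/4 := by
    exact_mod_cast congrArg Complex.ofReal (eLZ_sq g s)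
  rw [ELZ_cast, Matrix.mul_smul, HLZ, gHE (s:ℂ) (g:ℂ) _ hne he2, smul_comm]

lemma ELZ_mul_HLZ (g s : ℝ) (hg : 0 < g) :
    ELZ g s * HLZ g s = (-((eLZ g s : ℝ) : ℂ)) • ELZ g s := by
  have he := eLZ_pos g s hg
  have hne : ((eLZ g s : ℝ) : ℂ) ≠ 0 := by exact_mod_cast he.ne'
  have he2 : ((eLZ g s : ℝ) : ℂ)^2 = ((s:ℂ)^2 + (g:ℂ)^2)/4 := by
    exact_mod_cast congrArg Complex.ofReal (eLZ_sq g s)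
  rw [ELZ_cast, Matrix.smul_mul, HLZ, gEH (s:ℂ) (g:ℂ) _ hne he2, smul_comm]

lemma sqrtHLZ_eq (g s : ℝ) :
    sqrtHLZ g s
      = (((Real.sqrt (eLZ g s) : ℝ) : ℂ) * ((eLZ g s : ℝ) : ℂ)⁻¹) • HLZ g s := by
  simp only [sqrtHLZ, PpLZ, PmLZ]
  module

lemma LLZ_smul (g s γ : ℝ) (a : ℂ) (ρ : Matrix (Fin 2) (Fin 2) ℂ) :
    LLZ g s γ (a • ρ) = a • LLZ g s γ ρ := by
  simp only [LLZ, DLZ, mul_smul_comm, smul_mul_assoc, ← smul_sub, ← smul_neg,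
    smul_smul, ← smul_add]
  module

/-- `L ρ = (-2 i a - 2 γ e) ρ` whenever `H ρ = a ρ`, `ρ H = -a ρ` with `a² = e²`. -/
lemma LLZ_eigen (g s γ : ℝ) (hg : 0 < g) (a : ℂ)
    (ha : a^2 = ((eLZ g s : ℝ) : ℂ)^2) (ρ : Matrix (Fin 2) (Fin 2) ℂ)
    (h1 : HLZ g s * ρ = a • ρ) (h2 : ρ * HLZ g s = (-a) • ρ) :
    LLZ g s γ ρ
      = (-2*Complex.I*a - 2*(γ:ℂ)*((eLZ g s : ℝ) : ℂ)) • ρ := by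
  have he := eLZ_pos g s hg
  have hne : ((eLZ g s : ℝ) : ℂ) ≠ 0 := by exact_mod_cast he.ne'
  have hc2 : ((Real.sqrt (eLZ g s) : ℝ) : ℂ)^2 = ((eLZ g s : ℝ) : ℂ) := by
    exact_mod_cast congrArg Complex.ofReal (Real.sq_sqrt he.le)
  set e : ℂ := ((eLZ g s : ℝ) : ℂ) with hedef
  set c : ℂ := ((Real.sqrt (eLZ g s) : ℝ) : ℂ) * e⁻¹ with hcdef
  have hs1 : sqrtHLZ g s * ρ = (c * a) • ρ := by
    rw [sqrtHLZ_eq, Matrix.smul_mul, h1, smul_smul]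
  have hs2 : ρ * sqrtHLZ g s = (c * (-a)) • ρ := by
    rw [sqrtHLZ_eq, Matrix.mul_smul, h2, smul_smul]
  have hcsq : c^2 = e⁻¹ := by
    rw [hcdef, mul_pow, hc2]
    field_simp
  have hca : c^2 * a^2 = e := by
    rw [hcsq, ha, sq, ← mul_assoc, inv_mul_cancel₀ hne, one_mul]
  have hcomm : sqrtHLZ g s * ρ - ρ * sqrtHLZ g s = (2*c*a) • ρ := by
    rw [hs1, hs2]
    module
  have hD : DLZ g s ρ = (-(4*e)) • ρ := by
    rw [DLZ, hcomm, Matrix.mul_smul, Matrix.smul_mul, hs1, hs2, smul_smul, smul_smul,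
      ← sub_smul, ← neg_smul]
    congr 1
    linear_combination (-4:ℂ) * hca
  rw [LLZ, h1, h2, hD]
  module

/-- `L_s⁻¹ E_s = E_s / (2(-i-γ)e_s)` and `L_s⁻¹ E_s* = (L_s⁻¹ E_s)*`, i.e. applying
`L_s` to these expressions returns `E_s` resp. `E_s*`. -/
theorem LLZ_inverse_on_coherences (g s γ : ℝ) (hg : 0 < g) (hγ : 0 ≤ γ) :
    LLZ g s γ ((2 * (-Complex.I - (γ : ℂ)) * ((eLZ g s : ℝ) : ℂ))⁻¹ • ELZ g s)
      = ELZ g s ∧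
    LLZ g s γ (star ((2 * (-Complex.I - (γ : ℂ)) * ((eLZ g s : ℝ) : ℂ))⁻¹) • (ELZ g s)ᴴ)
      = (ELZ g s)ᴴ := by
  have he := eLZ_pos g s hg
  have hne : ((eLZ g s : ℝ) : ℂ) ≠ 0 := by exact_mod_cast he.ne'
  set e : ℂ := ((eLZ g s : ℝ) : ℂ) with hedef
  have hγne : (-Complex.I - (γ:ℂ)) ≠ 0 := by
    intro h
    have := congrArg Complex.im h
    simp at this
  have hcne : (2 * (-Complex.I - (γ : ℂ)) * e) ≠ 0 := by
    exact mul_ne_zero (mul_ne_zero two_ne_zero hγne) hne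
  have hHE := HLZ_mul_ELZ g s hg
  have hEH := ELZ_mul_HLZ g s hg
  have hL1 : LLZ g s γ (ELZ g s) = (2 * (-Complex.I - (γ : ℂ)) * e) • ELZ g s := by
    rw [LLZ_eigen g s γ hg e rfl (ELZ g s) hHE hEH]
    congr 1
    ring
  have hHh : (HLZ g s)ᴴ = HLZ g s := by
    simp only [HLZ]
    rw [conjTranspose_smul]
    congr 1
    · simp
    · ext i j
      fin_cases i <;> fin_cases j <;> simp
  have hstare : star e = e := by
    simp [hedef]
  have hHEc : HLZ g s * (ELZ g s)ᴴ = (-e) • (ELZ g s)ᴴ := by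
    calc HLZ g s * (ELZ g s)ᴴ = (HLZ g s)ᴴ * (ELZ g s)ᴴ := by rw [hHh]
    _ = (ELZ g s * HLZ g s)ᴴ := by rw [conjTranspose_mul]
    _ = ((-e) • ELZ g s)ᴴ := by rw [hEH]
    _ = (-e) • (ELZ g s)ᴴ := by rw [conjTranspose_smul, star_neg, hstare]
  have hEHc : (ELZ g s)ᴴ * HLZ g s = (-(-e)) • (ELZ g s)ᴴ := by
    calc (ELZ g s)ᴴ * HLZ g s = (ELZ g s)ᴴ * (HLZ g s)ᴴ := by rw [hHh]
    _ = (HLZ g s * ELZ g s)ᴴ := by rw [conjTranspose_mul]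
    _ = (e • ELZ g s)ᴴ := by rw [hHE]
    _ = (-(-e)) • (ELZ g s)ᴴ := by rw [conjTranspose_smul, hstare, neg_neg]
  have hL2 : LLZ g s γ ((ELZ g s)ᴴ)
      = (star (2 * (-Complex.I - (γ : ℂ)) * e)) • (ELZ g s)ᴴ := by
    rw [LLZ_eigen g s γ hg (-e) (by ring) ((ELZ g s)ᴴ) hHEc hEHc]
    congr 1
    rw [star_mul', star_mul', hstare]
    simp only [star_sub, star_neg, Complex.star_def, Complex.conj_I, Complex.conj_ofReal,
      map_ofNat]
    push_cast
    ring
  constructor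
  · rw [LLZ_smul, hL1, smul_smul, inv_mul_cancel₀ hcne, one_smul]
  · rw [LLZ_smul, hL2, smul_smul, ← star_mul',
      inv_mul_cancel₀ hcne, star_one, one_smul]
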